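/- arXiv:2406.04171 — 3 statements merged into one kernel-verified Lean document; each statement's English description precedes it below -/
import Mathlib

section
/- Let n ≥ 5. Then the intersection ∩_{2 ≤ i < j ≤ n} E_{i,j} is exactly the one-dimensional linear span of the single tuple Σ_{k=2}^n e_k ⊗ e^A_{k,1}. -/
open Matrix BigOperators

noncomputable section

/-- `e^A_{i,j} = e_i e_jᵀ − e_j e_iᵀ`. -/
def eA {n : ℕ} (i j : Fin n) : Matrix (Fin n) (Fin n) ℝ :=
  Matrix.single i j 1 - Matrix.single j i 1

/-- The action `(ρ(g)C)_μ := Σ_ν (g⁻¹)_{ν,μ} • g C_ν g⁻¹` on `n`-tuples of matrices. -/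
def rho {n : ℕ} (g : Matrix (Fin n) (Fin n) ℝ)
    (C : Fin n → Matrix (Fin n) (Fin n) ℝ) : Fin n → Matrix (Fin n) (Fin n) ℝ :=
  fun μ => ∑ ν, (g⁻¹ ν μ) • (g * C ν * g⁻¹)

/-- The plane rotation `g^θ_{i,j}`. -/
def rot {n : ℕ} (i j : Fin n) (θ : ℝ) : Matrix (Fin n) (Fin n) ℝ :=
  Matrix.of fun a b =>
    if a = i ∧ b = i then Real.cos θ
    else if a = j ∧ b = j then Real.cos θ
    else if a = i ∧ b = j then -Real.sin θ
    else if a = j ∧ b = i then Real.sin θ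
    else if a = b then 1 else 0

/-- `E_{i,j}`: the skew-symmetric tuples fixed by `ρ(g^θ_{i,j})` for all `θ`. -/
def Espace {n : ℕ} (i j : Fin n) : Set (Fin n → Matrix (Fin n) (Fin n) ℝ) :=
  {C | (∀ μ, (C μ)ᵀ = -(C μ)) ∧ ∀ θ : ℝ, rho (rot i j θ) C = C}

/-!
The tuple `v_μ = e^A_{μ,0}` is fixed by every orthogonal matrix fixing `e_0`: expanding `ρ(g)v`
entrywise only uses `g gᵀ = 1`. Conversely, a signed permutation matrix `g_{a,σ a} = s_a` acts
by `C_{μab} ↦ s_μ s_a s_b C_{σμ,σa,σb}`. The rotations by `π` in the planes `(x, w)` with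
`x, w ≠ 0` are diagonal sign matrices, and since `n ≥ 5` there is always a spare index `w`, so
they kill every entry in which some index `x ≠ 0` occurs an odd number of times among `μ, a, b`.
By skew-symmetry only the entries `C_{μμ0} = -C_{μ0μ}` survive, and the rotations by `π/2`,
which swap two indices, show that `C_{μμ0}` does not depend on `μ`.
-/

section SkewTuples

open Real

variable {n : ℕ} {i j : Fin n}

lemma eA_apply (i j a b : Fin n) :
    eA i j a b = (if a = i ∧ b = j then 1 else 0) - (if a = j ∧ b = i then 1 else 0) := by
  simp [eA, Matrix.single_apply, eq_comm]

lemma eA_self (i : Fin n) : eA i i = 0 := sub_self _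

lemma eA_transpose (i j : Fin n) : (eA i j)ᵀ = -eA i j := by
  simp [eA, Matrix.transpose_sub]

lemma mul_eA_mul_transpose_apply (g : Matrix (Fin n) (Fin n) ℝ) (i j a b : Fin n) :
    (g * eA i j * gᵀ) a b = g a i * g b j - g a j * g b i := by
  simp [eA, Matrix.mul_sub, Matrix.sub_mul, Matrix.single_eq_single_vecMulVec_single,
    Matrix.mul_vecMulVec, Matrix.vecMulVec_mul, Matrix.vecMulVec_apply]

lemma sum_filter_ne_single_eA (k : Fin n) :
    ∑ μ ∈ Finset.univ.filter (· ≠ k), Pi.single μ (eA μ k) = fun μ => eA μ k := by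
  funext μ
  rcases eq_or_ne μ k with rfl | hμ
  · simp [Finset.sum_apply, Pi.single_apply, eA_self]
  · simp [Finset.sum_apply, Pi.single_apply, hμ]

lemma rho_smul (g : Matrix (Fin n) (Fin n) ℝ) (r : ℝ) (C : Fin n → Matrix (Fin n) (Fin n) ℝ) :
    rho g (r • C) = r • rho g C := by
  funext μ
  simp [rho, Finset.smul_sum, smul_comm r]

lemma rho_of_mem_orthogonalGroup {g : Matrix (Fin n) (Fin n) ℝ}
    (hg : g ∈ Matrix.orthogonalGroup (Fin n) ℝ) (C : Fin n → Matrix (Fin n) (Fin n) ℝ)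
    (μ : Fin n) : rho g C μ = ∑ ν, g μ ν • (g * C ν * gᵀ) := by
  rw [Matrix.mem_orthogonalGroup_iff] at hg
  simp [rho, Matrix.inv_eq_right_inv hg]

lemma rho_eA_eq_self {g : Matrix (Fin n) (Fin n) ℝ} {k : Fin n}
    (hg : g ∈ Matrix.orthogonalGroup (Fin n) ℝ) (hk : ∀ a, g a k = if a = k then 1 else 0) :
    rho g (fun μ => eA μ k) = fun μ => eA μ k := by
  have hrows : ∀ x y, ∑ ν, g x ν * g y ν = if x = y then 1 else 0 := fun x y => by
    simpa [Matrix.mul_apply, Matrix.one_apply] using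
      congrFun (congrFun ((Matrix.mem_orthogonalGroup_iff _ _).1 hg) x) y
  funext μ
  ext a b
  simp only [rho_of_mem_orthogonalGroup hg, Matrix.sum_apply, Matrix.smul_apply, smul_eq_mul,
    mul_eA_mul_transpose_apply, hk, eA_apply]
  have hexpand : ∀ x (p q : ℝ), g μ x * (g a x * p - q * g b x) =
      g a x * g μ x * p - q * (g b x * g μ x) := fun x p q => by ring
  simp only [hexpand, Finset.sum_sub_distrib, ← Finset.sum_mul, ← Finset.mul_sum, hrows]
  split_ifs <;> simp_all

lemma signedPerm_mem_orthogonalGroup {g : Matrix (Fin n) (Fin n) ℝ} (σ : Equiv.Perm (Fin n))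
    {s : Fin n → ℝ} (hs : ∀ a, s a * s a = 1) (hg : ∀ a c, g a c = if c = σ a then s a else 0) :
    g ∈ Matrix.orthogonalGroup (Fin n) ℝ := by
  rw [Matrix.mem_orthogonalGroup_iff]
  ext a b
  rcases eq_or_ne a b with rfl | hab
  · simp [Matrix.mul_apply, hg, hs]
  · simp [Matrix.mul_apply, hg, hab, hab.symm]

lemma signedPerm_mul_mul_transpose_apply {g : Matrix (Fin n) (Fin n) ℝ} (σ : Equiv.Perm (Fin n))
    {s : Fin n → ℝ} (hg : ∀ a c, g a c = if c = σ a then s a else 0)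
    (M : Matrix (Fin n) (Fin n) ℝ) (a b : Fin n) :
    (g * M * gᵀ) a b = s a * s b * M (σ a) (σ b) := by
  simp only [Matrix.mul_apply, hg, ite_mul, zero_mul, Finset.sum_ite_eq', Finset.mem_univ,
    if_true, transpose_apply, mul_ite, mul_zero]
  ring

lemma rho_apply_apply_of_signedPerm {g : Matrix (Fin n) (Fin n) ℝ} (σ : Equiv.Perm (Fin n))
    {s : Fin n → ℝ} (hs : ∀ a, s a * s a = 1) (hg : ∀ a c, g a c = if c = σ a then s a else 0)
    (C : Fin n → Matrix (Fin n) (Fin n) ℝ) (μ a b : Fin n) :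
    rho g C μ a b = s μ * s a * s b * C (σ μ) (σ a) (σ b) := by
  simp only [rho_of_mem_orthogonalGroup (signedPerm_mem_orthogonalGroup σ hs hg), Matrix.sum_apply,
    Matrix.smul_apply, smul_eq_mul, signedPerm_mul_mul_transpose_apply σ hg, hg, ite_mul, zero_mul,
    Finset.sum_ite_eq', Finset.mem_univ, if_true]
  ring

lemma rot_mul_apply (hij : i ≠ j) (θ : ℝ) (M : Matrix (Fin n) (Fin n) ℝ) (a b : Fin n) :
    (rot i j θ * M) a b =
      if a = i then cos θ * M i b - sin θ * M j b
      else if a = j then sin θ * M i b + cos θ * M j b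
      else M a b := by
  rw [Matrix.mul_apply]
  split_ifs with hai haj
  · rw [Fintype.sum_eq_add i j hij (fun c hc => by simp [rot, hai, hc.1, hc.2, hij, Ne.symm hc.1])]
    simp [rot, hai, hij, hij.symm, sub_eq_add_neg]
  · rw [Fintype.sum_eq_add i j hij
      (fun c hc => by simp [rot, haj, hc.1, hc.2, hij.symm, Ne.symm hc.2])]
    simp [rot, haj, hij, hij.symm]
  · rw [Finset.sum_eq_single a (fun c _ hc => by simp [rot, hai, haj, Ne.symm hc]) (by simp)]
    simp [rot, hai, haj]

lemma rot_transpose (hij : i ≠ j) (θ : ℝ) : (rot i j θ)ᵀ = rot i j (-θ) := by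
  ext a b
  simp only [Matrix.transpose_apply, rot, Matrix.of_apply, cos_neg, sin_neg, neg_neg]
  grind

lemma rot_mem_orthogonalGroup (hij : i ≠ j) (θ : ℝ) :
    rot i j θ ∈ Matrix.orthogonalGroup (Fin n) ℝ := by
  rw [Matrix.mem_orthogonalGroup_iff, rot_transpose hij]
  ext a b
  have := cos_sq_add_sin_sq θ
  rw [rot_mul_apply hij]
  simp only [rot, Matrix.of_apply, Matrix.one_apply, cos_neg, sin_neg]
  grind

lemma rot_swap (hij : i ≠ j) (θ : ℝ) : rot j i θ = rot i j (-θ) := by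
  ext a b
  simp only [rot, Matrix.of_apply, cos_neg, sin_neg, neg_neg]
  grind

lemma rot_apply_of_ne {k : Fin n} (hki : k ≠ i) (hkj : k ≠ j) (θ : ℝ) (a : Fin n) :
    rot i j θ a k = if a = k then 1 else 0 := by
  simp [rot, hki, hkj]

lemma rot_pi_apply (a c : Fin n) :
    rot i j π a c = if c = Equiv.refl (Fin n) a then (if a = i ∨ a = j then -1 else 1) else 0 := by
  simp only [rot, Matrix.of_apply, cos_pi, sin_pi, neg_zero, Equiv.refl_apply]
  grind

lemma rot_pi_div_two_apply (hij : i ≠ j) (a c : Fin n) :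
    rot i j (π / 2) a c = if c = Equiv.swap i j a then (if a = i then -1 else 1) else 0 := by
  simp only [rot, Matrix.of_apply, cos_pi_div_two, sin_pi_div_two, Equiv.swap_apply_def]
  grind

lemma smul_mem_Espace {C : Fin n → Matrix (Fin n) (Fin n) ℝ} (r : ℝ) (hC : C ∈ Espace i j) :
    r • C ∈ Espace i j :=
  ⟨fun μ => by simp [hC.1 μ], fun θ => by rw [rho_smul, hC.2 θ]⟩

lemma eA_tuple_mem_Espace (hij : i ≠ j) {k : Fin n} (hik : i ≠ k) (hjk : j ≠ k) :
    (fun μ => eA μ k) ∈ Espace i j :=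
  ⟨fun μ => eA_transpose μ k, fun θ =>
    rho_eA_eq_self (rot_mem_orthogonalGroup hij θ) (rot_apply_of_ne hik.symm hjk.symm θ)⟩

lemma exists_ne_of_five_le (hn : 5 ≤ n) (p q r s : Fin n) :
    ∃ w, w ≠ p ∧ w ≠ q ∧ w ≠ r ∧ w ≠ s := by
  obtain ⟨w, -, hw⟩ := Finset.exists_mem_notMem_of_card_lt_card (s := {p, q, r, s})
    (t := Finset.univ) (by grw [Finset.card_le_four]; simp; omega)
  simp only [Finset.mem_insert, Finset.mem_singleton, not_or] at hw
  exact ⟨w, hw⟩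

section Invariants

variable {C : Fin n → Matrix (Fin n) (Fin n) ℝ}

lemma apply_eq_sign_mul_of_rho_rot_pi_eq (h : rho (rot i j π) C = C) (μ a b : Fin n) :
    C μ a b = (if μ = i ∨ μ = j then -1 else 1) * (if a = i ∨ a = j then -1 else 1) *
      (if b = i ∨ b = j then -1 else 1) * C μ a b := by
  conv_lhs => rw [← h]
  exact rho_apply_apply_of_signedPerm (Equiv.refl _) (fun _ => by split_ifs <;> norm_num)
    rot_pi_apply C μ a b

lemma apply_self_self_eq_of_rho_rot_pi_div_two_eq (hij : i ≠ j) {k : Fin n} (hki : k ≠ i)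
    (hkj : k ≠ j) (h : rho (rot i j (π / 2)) C = C) : C i i k = C j j k := by
  conv_lhs => rw [← h]
  rw [rho_apply_apply_of_signedPerm (Equiv.swap i j) (fun _ => by split_ifs <;> norm_num)
    (rot_pi_div_two_apply hij)]
  simp [Equiv.swap_apply_of_ne_of_ne hki hkj, hki]

lemma apply_eq_zero_of_forall_rho_rot_pi_eq (hn : 5 ≤ n) {k : Fin n}
    (hC : ∀ i j, i ≠ k → j ≠ k → i ≠ j → rho (rot i j π) C = C) {μ a b : Fin n}
    (hμab : ¬((a = μ ∧ b = k) ∨ (a = k ∧ b = μ) ∨ (μ = k ∧ a = b))) : C μ a b = 0 := by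
  obtain ⟨w, hwk, hwμ, hwa, hwb⟩ := exists_ne_of_five_le hn k μ a b
  have flip : ∀ x, x ≠ k → x ≠ w → C μ a b = (if μ = x then -1 else 1) *
      (if a = x then -1 else 1) * (if b = x then -1 else 1) * C μ a b := fun x hxk hxw => by
    simpa [hwμ.symm, hwa.symm, hwb.symm] using
      apply_eq_sign_mul_of_rho_rot_pi_eq (hC x w hxk hwk hxw) μ a b
  by_cases hab : a = b
  · subst hab
    have := flip μ (by tauto) hwμ.symm
    rw [if_pos rfl] at this
    split_ifs at this <;> linarith
  by_cases ha : a ≠ k ∧ a ≠ μ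
  · have := flip a ha.1 hwa.symm
    simp only [ha.2.symm, Ne.symm hab, if_true, if_false, mul_one, mul_neg, neg_mul,
      one_mul] at this
    linarith
  · have hb : b ≠ k ∧ b ≠ μ := by grind
    have := flip b hb.1 hwb.symm
    simp only [hb.2.symm, hab, if_true, if_false, mul_one, mul_neg, neg_mul, one_mul] at this
    linarith

theorem eq_smul_eA_of_forall_rho_rot_eq (hn : 5 ≤ n) {k k' : Fin n} (hk' : k' ≠ k)
    (hskew : ∀ μ, (C μ)ᵀ = -C μ)
    (hC : ∀ i j, i ≠ k → j ≠ k → i ≠ j → ∀ θ, rho (rot i j θ) C = C) :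
    C = C k' k' k • fun μ => eA μ k := by
  have hanti : ∀ μ a b, C μ b a = -C μ a b := fun μ a b => by
    simpa using congrFun (congrFun (hskew μ) a) b
  have hdiag : ∀ μ a, C μ a a = 0 := fun μ a => by linarith [hanti μ a a]
  have hconst : ∀ μ, μ ≠ k → C μ μ k = C k' k' k := by
    intro μ hμ
    rcases eq_or_ne μ k' with rfl | hμk'
    · rfl
    · exact apply_self_self_eq_of_rho_rot_pi_div_two_eq hμk' hμ.symm hk'.symm
        (hC μ k' hμ hk' hμk' _)
  funext μ
  ext a b
  simp only [Pi.smul_apply, Matrix.smul_apply, smul_eq_mul, eA_apply]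
  by_cases h1 : a = μ ∧ b = k
  · obtain ⟨rfl, rfl⟩ := h1
    rcases eq_or_ne a b with rfl | hab
    · simp [hdiag]
    · simp [hconst a hab, hab]
  by_cases h2 : a = k ∧ b = μ
  · obtain ⟨rfl, rfl⟩ := h2
    have hba : b ≠ a := by rintro rfl; exact h1 ⟨rfl, rfl⟩
    rw [hanti b b a, hconst b hba]
    simp [hba]
  by_cases h3 : μ = k ∧ a = b
  · obtain ⟨rfl, rfl⟩ := h3
    simp [hdiag]
  · rw [apply_eq_zero_of_forall_rho_rot_pi_eq hn (fun i j hi hj hij => hC i j hi hj hij π)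
      (by tauto)]
    simp [h1, h2]

end Invariants

end SkewTuples

theorem stmt4 (n : ℕ) (hn : 5 ≤ n)
    (v : Fin n → Matrix (Fin n) (Fin n) ℝ)
    (hv : v = ∑ k ∈ Finset.univ.filter (fun k : Fin n => k ≠ ⟨0, by omega⟩),
        Pi.single k (eA k (⟨0, by omega⟩ : Fin n))) :
    (⋂ (i : Fin n) (j : Fin n) (_ : 1 ≤ (i : ℕ)) (_ : i < j), Espace i j) =
        (Submodule.span ℝ {v} : Set _)
      ∧ v ≠ 0 := by
  set k : Fin n := ⟨0, by omega⟩
  have hpos : ∀ i : Fin n, 1 ≤ (i : ℕ) ↔ i ≠ k := fun i => by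
    simp only [ne_eq, Fin.ext_iff, k]
    omega
  have hk' : (⟨1, by omega⟩ : Fin n) ≠ k := by simp [k]
  rw [sum_filter_ne_single_eA] at hv
  subst hv
  refine ⟨Set.ext fun C => ⟨fun hC => ?_, fun hC => ?_⟩, fun h => ?_⟩
  · simp only [Set.mem_iInter] at hC
    have hskew := (hC ⟨1, by omega⟩ ⟨2, by omega⟩ le_rfl (by simp [Fin.lt_def])).1
    have hfix : ∀ i j, i ≠ k → j ≠ k → i ≠ j → ∀ θ, rho (rot i j θ) C = C := by
      intro i j hi hj hij θ
      rcases hij.lt_or_gt with h | h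
      · exact (hC i j ((hpos i).2 hi) h).2 θ
      · rw [rot_swap hij.symm]
        exact (hC j i ((hpos j).2 hj) h).2 (-θ)
    exact Submodule.mem_span_singleton.2
      ⟨_, (eq_smul_eA_of_forall_rho_rot_eq hn hk' hskew hfix).symm⟩
  · obtain ⟨r, rfl⟩ := Submodule.mem_span_singleton.1 hC
    simp only [Set.mem_iInter]
    intro i j hi hij
    exact smul_mem_Espace r
      (eA_tuple_mem_Espace hij.ne ((hpos i).1 hi) ((hpos j).1 (hi.trans hij.le)))
  · simpa [eA_apply, hk'] using congrFun (congrFun (congrFun h ⟨1, by omega⟩) ⟨1, by omega⟩) k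
end
end

section
/- Let 1 ≤ p ≤ q with n = p+q ≥ 5, and let B : M_{p,q} → (so(p,q))ⁿ be algebraically SO⁺(p,q)-equivariant. Then there exists a function g : (0,∞) → ℝ such that for every x ∈ M_{p,q} (with the additional restriction x₁ > 0 in case p = 1) and all indices μ, i, j: (B_μ(x))_{i,j} = g(‖x‖)·ε(j)·(δ_{μ,j} x_i − δ_{μ,i} x_j), where δ is the Kronecker delta. -/
open Matrix BigOperators

noncomputable section

/-- `I_{p,q} = diag(1,…,1,−1,…,−1)` with `p` ones and `q` minus-ones. -/
def Ipq (p q : ℕ) : Matrix (Fin (p + q)) (Fin (p + q)) ℝ :=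
  Matrix.diagonal fun i => if (i : ℕ) < p then 1 else -1

/-- The quadratic form `xᵀ I_{p,q} x`. -/
def qform (p q : ℕ) (x : Fin (p + q) → ℝ) : ℝ := x ⬝ᵥ (Ipq p q *ᵥ x)

/-- `‖x‖ = √(xᵀ I_{p,q} x)` for timelike `x`. -/
def pqnorm (p q : ℕ) (x : Fin (p + q) → ℝ) : ℝ := Real.sqrt (qform p q x)

/-- Membership in `SO⁺(p,q)`: preserves `I_{p,q}`, has determinant one, and the
top-left `p×p` block has positive determinant. -/
def SOplus (p q : ℕ) (g : Matrix (Fin (p + q)) (Fin (p + q)) ℝ) : Prop :=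
  gᵀ * Ipq p q * g = Ipq p q ∧ g.det = 1 ∧
    0 < (g.submatrix (Fin.castLE (Nat.le_add_right p q))
          (Fin.castLE (Nat.le_add_right p q))).det

/-- `ε(i) = 1` for `i ≤ p` (0-based: `i < p`) and `−1` otherwise. -/
def epsP (p : ℕ) {n : ℕ} (i : Fin n) : ℝ := if (i : ℕ) < p then 1 else -1

/-!
Write `u ∧ v := (u vᵀ - v uᵀ) I_{p,q}`, so that the claim is `B_μ(x) = g(‖x‖) • (x ∧ e_μ)`.
Since `Λ (u ∧ v) Λ⁻¹ = Λu ∧ Λv` when `Λ` preserves `I_{p,q}`, this form is transported along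
`SO⁺(p,q)`, and every timelike `x` (with `x₀ > 0` when `p = 1`) is reached from `‖x‖ e₀` by
rotations inside the two blocks followed by one boost in the plane `(0, p)`. So it suffices to
treat `x = r e₀`, which is fixed by every rotation or boost `Λ` in a coordinate plane `(a, b)`
avoiding `0`; there equivariance reads `B_μ Λ = ∑_ν (Λ⁻¹)_{νμ} Λ B_ν`. For `μ ∉ {a, b}` it makes
`B_μ` commute with `Λ`, which kills `(B_μ)_{ia}` for `i ∉ {a, b}`, and since `n ≥ 5` every entry
`(B_μ)_{ij}` with `j ∉ {0, μ, i}` is of this kind. For `μ = a` its `(0, b)` entry gives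
`ε(a) (B_a)_{0a} = ε(b) (B_b)_{0b}`, and antisymmetry in `so(p,q)` determines the remaining entries.
-/

section Signature

variable {p q : ℕ}

lemma epsP_mul_self {n : ℕ} (i : Fin n) : epsP p i * epsP p i = 1 := by
  unfold epsP; split_ifs <;> norm_num

lemma epsP_eq_one_or {n : ℕ} (i : Fin n) : epsP p i = 1 ∨ epsP p i = -1 := by
  unfold epsP; split_ifs <;> simp

lemma Ipq_eq_diagonal : Ipq p q = diagonal (epsP p) := rfl

lemma Ipq_mul_self : Ipq p q * Ipq p q = 1 := by
  simp [Ipq_eq_diagonal, diagonal_mul_diagonal, epsP_mul_self]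

lemma qform_eq_sum (x : Fin (p + q) → ℝ) : qform p q x = ∑ m, epsP p m * x m ^ 2 := by
  simp only [qform, Ipq_eq_diagonal, mulVec_diagonal, dotProduct]
  exact Finset.sum_congr rfl fun m _ => by ring

lemma qform_single {o : Fin (p + q)} (ho : (o : ℕ) < p) (r : ℝ) :
    qform p q (Pi.single o r) = r ^ 2 := by
  rw [qform_eq_sum, Fintype.sum_eq_single o fun m hm => by simp [hm]]
  simp [epsP, ho]

end Signature

section Isometry

variable {p q : ℕ} {Λ : Matrix (Fin (p + q)) (Fin (p + q)) ℝ}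

lemma inv_eq_of_isometry (hΛ : Λᵀ * Ipq p q * Λ = Ipq p q) :
    Λ⁻¹ = Ipq p q * Λᵀ * Ipq p q :=
  inv_eq_left_inv <| by rw [Matrix.mul_assoc, Matrix.mul_assoc, ← Matrix.mul_assoc Λᵀ, hΛ,
    Ipq_mul_self]

lemma inv_apply_of_isometry (hΛ : Λᵀ * Ipq p q * Λ = Ipq p q) (k l : Fin (p + q)) :
    Λ⁻¹ k l = epsP p k * epsP p l * Λ l k := by
  rw [inv_eq_of_isometry hΛ, Ipq_eq_diagonal, mul_diagonal, diagonal_mul, transpose_apply]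
  ring

lemma mul_inv_of_isometry (hΛ : Λᵀ * Ipq p q * Λ = Ipq p q) : Λ * Λ⁻¹ = 1 := by
  rw [mul_eq_one_comm, inv_eq_of_isometry hΛ, Matrix.mul_assoc, Matrix.mul_assoc,
    ← Matrix.mul_assoc Λᵀ, hΛ, Ipq_mul_self]

lemma qform_mulVec_of_isometry (hΛ : Λᵀ * Ipq p q * Λ = Ipq p q) (x : Fin (p + q) → ℝ) :
    qform p q (Λ *ᵥ x) = qform p q x := by
  rw [qform, mulVec_mulVec, dotProduct_mulVec, vecMul_mulVec,
    ← Matrix.mul_assoc, hΛ, ← dotProduct_mulVec, qform]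

end Isometry

lemma apply_eq_neg_of_so {p q : ℕ} {M : Matrix (Fin (p + q)) (Fin (p + q)) ℝ}
    (hM : Mᵀ * Ipq p q + Ipq p q * M = 0) (a b : Fin (p + q)) :
    M a b = -(epsP p a * epsP p b * M b a) := by
  have h := congrFun (congrFun hM b) a
  rw [Matrix.add_apply, Ipq_eq_diagonal, mul_diagonal, diagonal_mul, transpose_apply,
    Matrix.zero_apply] at h
  linear_combination epsP p a * h - M a b * epsP_mul_self (p := p) a

def wedge (p q : ℕ) (u v : Fin (p + q) → ℝ) : Matrix (Fin (p + q)) (Fin (p + q)) ℝ :=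
  vecMulVec u (Ipq p q *ᵥ v) - vecMulVec v (Ipq p q *ᵥ u)

section Wedge

variable {p q : ℕ}

lemma wedge_apply (u v : Fin (p + q) → ℝ) (i j : Fin (p + q)) :
    wedge p q u v i j = epsP p j * (u i * v j - v i * u j) := by
  simp only [wedge, Matrix.sub_apply, vecMulVec_apply, Ipq_eq_diagonal, mulVec_diagonal]
  ring

lemma wedge_sum_smul {ι : Type*} (s : Finset ι) (u : Fin (p + q) → ℝ) (a : ι → ℝ)
    (v : ι → Fin (p + q) → ℝ) :
    wedge p q u (∑ ν ∈ s, a ν • v ν) = ∑ ν ∈ s, a ν • wedge p q u (v ν) := by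
  ext i j
  simp only [wedge_apply, Matrix.sum_apply, Finset.sum_apply, Matrix.smul_apply, Pi.smul_apply,
    smul_eq_mul, Finset.mul_sum, Finset.sum_mul, ← Finset.sum_sub_distrib]
  exact Finset.sum_congr rfl fun ν _ => by ring

lemma wedge_smul_left (r : ℝ) (u v : Fin (p + q) → ℝ) :
    wedge p q (r • u) v = r • wedge p q u v := by
  ext i j
  simp only [wedge_apply, Pi.smul_apply, Matrix.smul_apply, smul_eq_mul]
  ring

variable {Λ : Matrix (Fin (p + q)) (Fin (p + q)) ℝ}

lemma Ipq_mulVec_vecMul_inv (hΛ : Λᵀ * Ipq p q * Λ = Ipq p q) (v : Fin (p + q) → ℝ) :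
    (Ipq p q *ᵥ v) ᵥ* Λ⁻¹ = Ipq p q *ᵥ (Λ *ᵥ v) := by
  ext j
  rw [Ipq_eq_diagonal, mulVec_diagonal]
  simp only [vecMul, dotProduct, mulVec_diagonal, inv_apply_of_isometry hΛ]
  rw [mulVec, dotProduct, Finset.mul_sum]
  refine Finset.sum_congr rfl fun k _ => ?_
  linear_combination (epsP p j * Λ j k * v k) * epsP_mul_self (p := p) k

lemma conj_wedge (hΛ : Λᵀ * Ipq p q * Λ = Ipq p q) (u v : Fin (p + q) → ℝ) :
    Λ * wedge p q u v * Λ⁻¹ = wedge p q (Λ *ᵥ u) (Λ *ᵥ v) := by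
  simp only [wedge, Matrix.mul_sub, Matrix.sub_mul, mul_vecMulVec, vecMulVec_mul,
    Ipq_mulVec_vecMul_inv hΛ]

end Wedge

lemma eq_smul_wedge_of_entries {p q : ℕ}
    {M : Fin (p + q) → Matrix (Fin (p + q)) (Fin (p + q)) ℝ} {o : Fin (p + q)}
    (ho : (o : ℕ) < p) (κ : ℝ)
    (hanti : ∀ μ i j, M μ i j = -(epsP p i * epsP p j * M μ j i))
    (hzero : ∀ μ i j, j ≠ o → μ ≠ j → i ≠ j → M μ i j = 0)
    (hdiag : ∀ j, j ≠ o → epsP p j * M j o j = κ) (μ : Fin (p + q)) :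
    M μ = κ • wedge p q (Pi.single o 1) (Pi.single μ 1) := by
  have heo : epsP p o = 1 := if_pos ho
  ext i j
  rw [Matrix.smul_apply, wedge_apply, smul_eq_mul]
  by_cases hij : i = j
  · subst hij
    have h := hanti μ i i
    have hii : M μ i i = 0 := by
      linear_combination h / 2 - M μ i i * epsP_mul_self (p := p) i / 2
    simp [hii, mul_comm]
  by_cases hjo : j = o
  · subst hjo
    have hio : i ≠ j := hij
    by_cases hμi : μ = i
    · subst hμi
      rw [hanti, ← hdiag μ hio]
      simp [hio, heo]
    · rw [hanti, hzero μ j i hio hμi (Ne.symm hij)]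
      simp [Pi.single_apply, hio, Ne.symm hμi]
  by_cases hμj : μ = j
  · subst hμj
    by_cases hio : i = o
    · subst hio
      have h := hdiag μ hjo
      simp only [Pi.single_eq_same, Pi.single_eq_of_ne (Ne.symm hjo), mul_one]
      linear_combination epsP p μ * h - M μ i μ * epsP_mul_self (p := p) μ
    · rw [hanti, hzero μ μ i hio (Ne.symm hij) (Ne.symm hij)]
      simp [Pi.single_apply, hio, Ne.symm hjo]
  · rw [hzero μ i j hjo hμj hij]
    simp [Pi.single_apply, hjo, Ne.symm hμj]

section Equivariance

variable {p q : ℕ}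
  {B : (Fin (p + q) → ℝ) → Fin (p + q) → Matrix (Fin (p + q)) (Fin (p + q)) ℝ}

def IsEquivariant (p q : ℕ)
    (B : (Fin (p + q) → ℝ) → Fin (p + q) → Matrix (Fin (p + q)) (Fin (p + q)) ℝ) : Prop :=
  ∀ Λ : Matrix (Fin (p + q)) (Fin (p + q)) ℝ, SOplus p q Λ →
    ∀ x, 0 < qform p q x → ∀ μ : Fin (p + q),
      B (Λ *ᵥ x) μ = ∑ ν, Λ⁻¹ ν μ • (Λ * B x ν * Λ⁻¹)

def IsWedgeForm
    (B : (Fin (p + q) → ℝ) → Fin (p + q) → Matrix (Fin (p + q)) (Fin (p + q)) ℝ)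
    (c : ℝ) (y : Fin (p + q) → ℝ) : Prop :=
  ∀ μ, B y μ = c • wedge p q y (Pi.single μ 1)

lemma IsWedgeForm.mulVec (hB : IsEquivariant p q B) {Λ : Matrix (Fin (p + q)) (Fin (p + q)) ℝ}
    (hΛ : SOplus p q Λ) {y : Fin (p + q) → ℝ} (hy : 0 < qform p q y) {c : ℝ}
    (h : IsWedgeForm B c y) : IsWedgeForm B c (Λ *ᵥ y) := by
  intro μ
  have hcol : ∑ ν, Λ⁻¹ ν μ • (Λ *ᵥ Pi.single ν 1) = Pi.single μ 1 := by
    ext i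
    simp only [Finset.sum_apply, Pi.smul_apply, mulVec_single_one, col_apply, smul_eq_mul,
      mul_comm (Λ⁻¹ _ μ)]
    rw [← mul_apply, mul_inv_of_isometry hΛ.1, one_apply, Pi.single_apply]
  have hterm : ∀ ν, Λ⁻¹ ν μ • (Λ * B y ν * Λ⁻¹) =
      c • Λ⁻¹ ν μ • wedge p q (Λ *ᵥ y) (Λ *ᵥ Pi.single ν 1) := fun ν => by
    rw [h, Matrix.mul_smul, Matrix.smul_mul, conj_wedge hΛ.1, smul_comm]
  rw [hB Λ hΛ y hy μ, Finset.sum_congr rfl fun ν _ => hterm ν, ← Finset.smul_sum,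
    ← wedge_sum_smul, hcol]

-- Chains stand in for single elements, so closure of `SO⁺(p,q)` under products is never needed.
def SOplusChain (p q : ℕ) : (Fin (p + q) → ℝ) → (Fin (p + q) → ℝ) → Prop :=
  Relation.ReflTransGen fun z y => ∃ Λ, SOplus p q Λ ∧ Λ *ᵥ z = y

lemma SOplusChain.single {Λ : Matrix (Fin (p + q)) (Fin (p + q)) ℝ} (hΛ : SOplus p q Λ)
    (z : Fin (p + q) → ℝ) : SOplusChain p q z (Λ *ᵥ z) :=
  Relation.ReflTransGen.single ⟨Λ, hΛ, rfl⟩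

lemma SOplusChain.qform_eq {z y : Fin (p + q) → ℝ} (h : SOplusChain p q z y) :
    qform p q y = qform p q z := by
  induction h with
  | refl => rfl
  | tail _ hstep ih =>
    obtain ⟨Λ, hΛ, rfl⟩ := hstep
    rw [qform_mulVec_of_isometry hΛ.1, ih]

lemma IsWedgeForm.of_chain (hB : IsEquivariant p q B) {z y : Fin (p + q) → ℝ}
    (h : SOplusChain p q z y) (hz : 0 < qform p q z) {c : ℝ} (hc : IsWedgeForm B c z) :
    IsWedgeForm B c y := by
  induction h with
  | refl => exact hc
  | tail hzy hstep ih =>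
    obtain ⟨Λ, hΛ, rfl⟩ := hstep
    exact ih.mulVec hB hΛ (SOplusChain.qform_eq hzy ▸ hz)

end Equivariance

def planeMatrix (n : ℕ) (a b : Fin n) (A B C D : ℝ) : Matrix (Fin n) (Fin n) ℝ :=
  fun k l => if k = a then (if l = a then A else if l = b then B else 0)
    else if k = b then (if l = a then C else if l = b then D else 0)
    else if k = l then 1 else 0

section PlaneMatrix

variable {n : ℕ} {a b : Fin n} {A B C D : ℝ}

lemma planeMatrix_swap (hab : a ≠ b) : planeMatrix n a b A B C D = planeMatrix n b a D C B A := by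
  ext k l
  simp only [planeMatrix]
  split_ifs <;> simp_all

lemma planeMatrix_mul_apply_of_ne (M : Matrix (Fin n) (Fin n) ℝ) {k : Fin n} (hka : k ≠ a)
    (hkb : k ≠ b) (l : Fin n) : (planeMatrix n a b A B C D * M) k l = M k l := by
  rw [mul_apply, Fintype.sum_eq_single k fun m hm => by simp [planeMatrix, hka, hkb, Ne.symm hm]]
  simp [planeMatrix, hka, hkb]

lemma vecMul_planeMatrix (hab : a ≠ b) (v : Fin n → ℝ) :
    v ᵥ* planeMatrix n a b A B C D = fun l =>
      if l = a then v a * A + v b * C else if l = b then v a * B + v b * D else v l := by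
  ext l
  rw [vecMul, dotProduct]
  split_ifs with hla hlb
  · rw [Fintype.sum_eq_add a b hab fun m hm => by simp [planeMatrix, hla, hm.1, hm.2]]
    simp [planeMatrix, hla, hab.symm]
  · rw [Fintype.sum_eq_add a b hab fun m hm => by simp [planeMatrix, hlb, hm.1, hm.2]]
    simp [planeMatrix, hlb, hab.symm]
  · rw [Fintype.sum_eq_single l fun m hm => by
      by_cases hma : m = a <;> by_cases hmb : m = b <;> simp [planeMatrix, *]]
    simp [planeMatrix, hla, hlb]

lemma mul_planeMatrix_apply (hab : a ≠ b) (M : Matrix (Fin n) (Fin n) ℝ) (k l : Fin n) :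
    (M * planeMatrix n a b A B C D) k l =
      if l = a then M k a * A + M k b * C
      else if l = b then M k a * B + M k b * D else M k l := by
  rw [mul_apply_eq_vecMul, vecMul_planeMatrix hab]

lemma planeMatrix_transpose : (planeMatrix n a b A B C D)ᵀ = planeMatrix n a b A C B D := by
  ext k l
  simp only [transpose_apply, planeMatrix]
  split_ifs <;> subst_vars <;> first | rfl | contradiction

lemma planeMatrix_mulVec (hab : a ≠ b) (v : Fin n → ℝ) :
    planeMatrix n a b A B C D *ᵥ v = fun k =>
      if k = a then v a * A + v b * B else if k = b then v a * C + v b * D else v k := by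
  rw [← vecMul_transpose, planeMatrix_transpose, vecMul_planeMatrix hab]

lemma planeMatrix_det (hab : a ≠ b) : (planeMatrix n a b A B C D).det = A * D - B * C := by
  let U : Matrix (Fin n) (Fin 2) ℝ := of fun k t => (Pi.single (![a, b] t) 1 : Fin n → ℝ) k
  let V : Matrix (Fin 2) (Fin n) ℝ := of fun t l =>
    !![A - 1, B; C, D - 1] t 0 * (Pi.single a 1 : Fin n → ℝ) l +
      !![A - 1, B; C, D - 1] t 1 * (Pi.single b 1 : Fin n → ℝ) l
  have hUV : planeMatrix n a b A B C D = 1 + U * V := by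
    ext k l
    simp only [planeMatrix, U, V, Matrix.add_apply, mul_apply, Fin.sum_univ_two,
      Matrix.one_apply, of_apply, Pi.single_apply]
    split_ifs <;> simp_all
  have hVU : V * U = !![A - 1, B; C, D - 1] := by
    ext s t
    fin_cases s <;> fin_cases t <;>
      simp [U, V, mul_apply, Pi.single_apply, add_mul, ite_mul, Finset.sum_add_distrib, hab.symm]
  rw [hUV, det_one_add_mul_comm, hVU, det_fin_two]
  simp

lemma planeMatrix_submatrix {m : ℕ} {f : Fin m → Fin n} (hf : Function.Injective f)
    (a' b' : Fin m) :
    (planeMatrix n (f a') (f b') A B C D).submatrix f f = planeMatrix m a' b' A B C D := by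
  ext k l
  simp [planeMatrix, hf.eq_iff]

lemma planeMatrix_submatrix_of_forall_ne {m : ℕ} {f : Fin m → Fin n} (hf : Function.Injective f)
    (hb : ∀ k, f k ≠ b) :
    (planeMatrix n a b A B C D).submatrix f f = diagonal fun k => if f k = a then A else 1 := by
  ext k l
  by_cases hkl : k = l
  · subst hkl
    by_cases hka : f k = a <;> simp [planeMatrix, hb, hka]
  · have hfkl : f k ≠ f l := hf.ne hkl
    simp only [submatrix_apply, planeMatrix, diagonal_apply_ne _ hkl, hb, hfkl, if_false]
    split_ifs <;> simp_all

end PlaneMatrix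

-- A rotation if `a` and `b` lie in the same block of `I_{p,q}`, a boost otherwise.
def planeRotation (p q : ℕ) (a b : Fin (p + q)) (c s : ℝ) :
    Matrix (Fin (p + q)) (Fin (p + q)) ℝ :=
  planeMatrix (p + q) a b c (-(epsP p a * epsP p b) * s) s c

section PlaneRotation

variable {p q : ℕ} {a b : Fin (p + q)} {c s : ℝ}

lemma planeRotation_isometry (hab : a ≠ b) (h : c ^ 2 + epsP p a * epsP p b * s ^ 2 = 1) :
    (planeRotation p q a b c s)ᵀ * Ipq p q * planeRotation p q a b c s = Ipq p q := by
  rcases epsP_eq_one_or (p := p) a with ha | ha <;>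
    rcases epsP_eq_one_or (p := p) b with hb | hb <;>
  · ext k l
    rw [planeRotation, mul_planeMatrix_apply hab]
    simp only [Ipq_eq_diagonal, mul_diagonal, transpose_apply, planeMatrix, diagonal_apply]
    split_ifs <;> subst_vars <;> simp only [ha, hb] at h ⊢ <;>
      first | contradiction | ring1 | linear_combination h | linear_combination -h

lemma det_topLeft_planeMatrix_pos {A B C D : ℝ} (hb : p ≤ (b : ℕ))
    (hA : 0 < A ∨ p ≤ (a : ℕ)) :
    0 < ((planeMatrix (p + q) a b A B C D).submatrix (Fin.castLE (Nat.le_add_right p q))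
      (Fin.castLE (Nat.le_add_right p q))).det := by
  have hf := Fin.castLE_injective (Nat.le_add_right p q)
  rw [planeMatrix_submatrix_of_forall_ne hf fun k =>
    Fin.ne_of_val_ne (by rw [Fin.val_castLE]; omega), det_diagonal]
  refine Finset.prod_pos fun k _ => ?_
  split_ifs with hk
  · exact hA.resolve_right fun ha => absurd (congrArg Fin.val hk) (by rw [Fin.val_castLE]; omega)
  · exact one_pos

lemma SOplus_planeRotation (hab : a ≠ b) (h : c ^ 2 + epsP p a * epsP p b * s ^ 2 = 1)
    (hc : epsP p a = epsP p b ∨ 0 < c) : SOplus p q (planeRotation p q a b c s) := by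
  refine ⟨planeRotation_isometry hab h, ?_, ?_⟩
  · rw [planeRotation, planeMatrix_det hab]
    linear_combination h
  have hpos : 0 < c ∨ ((a : ℕ) < p ↔ (b : ℕ) < p) := by
    refine hc.symm.imp_right fun he => ?_
    unfold epsP at he
    split_ifs at he <;> norm_num at he <;> tauto
  by_cases hb : p ≤ (b : ℕ)
  · exact det_topLeft_planeMatrix_pos hb (hpos.imp_right fun h => by omega)
  by_cases ha : p ≤ (a : ℕ)
  · rw [planeRotation, planeMatrix_swap hab]
    exact det_topLeft_planeMatrix_pos ha (hpos.imp_right fun h => by omega)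
  have hf := Fin.castLE_injective (Nat.le_add_right p q)
  obtain ⟨a', rfl⟩ : ∃ a' : Fin p, Fin.castLE (Nat.le_add_right p q) a' = a :=
    ⟨⟨a, by omega⟩, rfl⟩
  obtain ⟨b', rfl⟩ : ∃ b' : Fin p, Fin.castLE (Nat.le_add_right p q) b' = b :=
    ⟨⟨b, by omega⟩, rfl⟩
  rw [planeRotation, planeMatrix_submatrix hf, planeMatrix_det (hf.ne_iff.mp hab)]
  linarith

lemma planeRotation_inv (hab : a ≠ b) (h : c ^ 2 + epsP p a * epsP p b * s ^ 2 = 1) :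
    (planeRotation p q a b c s)⁻¹ = planeRotation p q a b c (-s) := by
  ext k l
  rw [inv_apply_of_isometry (planeRotation_isometry hab h)]
  rcases epsP_eq_one_or (p := p) a with ha | ha <;>
    rcases epsP_eq_one_or (p := p) b with hb | hb <;>
  · simp only [planeRotation, planeMatrix]
    split_ifs <;> subst_vars <;> (try simp only [ha, hb, mul_one, epsP_mul_self]) <;>
      first | contradiction | rfl | ring1

lemma planeRotation_mulVec_of_eq_zero (hab : a ≠ b) {x : Fin (p + q) → ℝ} (ha : x a = 0)
    (hb : x b = 0) : planeRotation p q a b c s *ᵥ x = x := by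
  ext k
  rw [planeRotation, planeMatrix_mulVec hab]
  dsimp only
  split_ifs <;> simp [*]

end PlaneRotation

lemma exists_planeRotation_params {p n : ℕ} (a b : Fin n) :
    ∃ c s : ℝ, 0 < c ∧ s ≠ 0 ∧ c ^ 2 + epsP p a * epsP p b * s ^ 2 = 1 := by
  have he : epsP p a * epsP p b = 1 ∨ epsP p a * epsP p b = -1 := by
    rcases epsP_eq_one_or (p := p) a with ha | ha <;>
      rcases epsP_eq_one_or (p := p) b with hb | hb <;> simp [ha, hb]
  rcases he with he | he <;> rw [he]
  · exact ⟨3 / 5, 4 / 5, by norm_num, by norm_num, by norm_num⟩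
  · exact ⟨5 / 4, 3 / 4, by norm_num, by norm_num, by norm_num⟩

section Stabilizer

variable {p q : ℕ}
  {B : (Fin (p + q) → ℝ) → Fin (p + q) → Matrix (Fin (p + q)) (Fin (p + q)) ℝ}
  {x : Fin (p + q) → ℝ} {a b : Fin (p + q)} {c s : ℝ}

lemma mul_planeRotation_apply_of_stabilizer (hB : IsEquivariant p q B) (hx : 0 < qform p q x)
    (hab : a ≠ b) (hxa : x a = 0) (hxb : x b = 0) (h : c ^ 2 + epsP p a * epsP p b * s ^ 2 = 1)
    (hΛ : SOplus p q (planeRotation p q a b c s)) (μ : Fin (p + q)) {i : Fin (p + q)}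
    (hia : i ≠ a) (hib : i ≠ b) (l : Fin (p + q)) :
    (B x μ * planeRotation p q a b c s) i l =
      ((fun ν => B x ν i l) ᵥ* planeRotation p q a b c (-s)) μ := by
  have hfix := planeRotation_mulVec_of_eq_zero (c := c) (s := s) hab hxa hxb
  have hinv : (planeRotation p q a b c s)⁻¹ * planeRotation p q a b c s = 1 := by
    rw [mul_eq_one_comm]; exact mul_inv_of_isometry hΛ.1
  have hrel : B x μ * planeRotation p q a b c s =
      ∑ ν, (planeRotation p q a b c s)⁻¹ ν μ • (planeRotation p q a b c s * B x ν) := by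
    conv_lhs => rw [← hfix, hB _ hΛ x hx μ, Finset.sum_mul]
    simp only [smul_mul_assoc, Matrix.mul_assoc, hinv, Matrix.mul_one]
  rw [hrel, Matrix.sum_apply, ← planeRotation_inv hab h, vecMul, dotProduct]
  refine Finset.sum_congr rfl fun ν _ => ?_
  rw [Matrix.smul_apply, smul_eq_mul, planeRotation, planeMatrix_mul_apply_of_ne _ hia hib,
    mul_comm]

lemma apply_eq_zero_of_stabilizer (hB : IsEquivariant p q B) (hx : 0 < qform p q x)
    (hab : a ≠ b) (hxa : x a = 0) (hxb : x b = 0) {μ i : Fin (p + q)} (hμa : μ ≠ a)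
    (hμb : μ ≠ b) (hia : i ≠ a) (hib : i ≠ b) : B x μ i a = 0 := by
  obtain ⟨c, s, hc, hs, h⟩ := exists_planeRotation_params (p := p) a b
  have hΛ := SOplus_planeRotation hab h (Or.inr hc)
  have e1 := mul_planeRotation_apply_of_stabilizer hB hx hab hxa hxb h hΛ μ hia hib a
  have e2 := mul_planeRotation_apply_of_stabilizer hB hx hab hxa hxb h hΛ μ hia hib b
  simp only [planeRotation, mul_planeMatrix_apply hab, vecMul_planeMatrix hab,
    if_true, if_neg hab.symm, if_neg hμa, if_neg hμb] at e1 e2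
  have hc1 : c ≠ 1 := by
    rintro rfl
    refine hs (pow_eq_zero_iff two_ne_zero |>.mp ?_)
    linear_combination epsP p a * epsP p b * h - s ^ 2 * epsP_mul_self (p := p) a
      - s ^ 2 * epsP p a * epsP p a * epsP_mul_self (p := p) b
  -- `2 - 2c = (c - 1)² + ε(a)ε(b)s²` is the determinant of `Λ - 1` on the plane `(a, b)`.
  have h2 : (2 - 2 * c) * B x μ i a = 0 := by
    linear_combination (c - 1) * e1 - s * e2 - B x μ i a * h
  exact (mul_eq_zero.mp h2).resolve_left fun h0 => hc1 (by linarith)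

lemma epsP_mul_apply_eq_of_stabilizer (hB : IsEquivariant p q B) (hx : 0 < qform p q x)
    (hab : a ≠ b) (hxa : x a = 0) (hxb : x b = 0) {o : Fin (p + q)} (hoa : o ≠ a)
    (hob : o ≠ b) : epsP p a * B x a o a = epsP p b * B x b o b := by
  obtain ⟨c, s, hc, hs, h⟩ := exists_planeRotation_params (p := p) a b
  have hΛ := SOplus_planeRotation hab h (Or.inr hc)
  have e := mul_planeRotation_apply_of_stabilizer hB hx hab hxa hxb h hΛ a hoa hob b
  simp only [planeRotation, mul_planeMatrix_apply hab, vecMul_planeMatrix hab,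
    if_true, if_neg hab.symm] at e
  have h2 : s * (epsP p a * B x a o a - epsP p b * B x b o b) = 0 := by
    linear_combination (-epsP p b) * e - s * epsP p a * B x a o a * epsP_mul_self (p := p) b
  exact sub_eq_zero.mp ((mul_eq_zero.mp h2).resolve_left hs)

lemma isWedgeForm_single (hB : IsEquivariant p q B)
    (hn : 5 ≤ p + q) {o : Fin (p + q)} (ho : (o : ℕ) < p) {r : ℝ} (hr : 0 < r)
    (hso : ∀ μ, (B (Pi.single o r) μ)ᵀ * Ipq p q + Ipq p q * B (Pi.single o r) μ = 0)
    {w : Fin (p + q)} (hw : w ≠ o) :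
    IsWedgeForm B (epsP p w * B (Pi.single o r) w o w / r) (Pi.single o r) := by
  set x : Fin (p + q) → ℝ := Pi.single o r with hxdef
  have hx : 0 < qform p q x := by rw [qform_single ho]; positivity
  have hx0 : ∀ k, k ≠ o → x k = 0 := fun k hk => by simp [hxdef, hk]
  have hzero : ∀ μ i j, j ≠ o → μ ≠ j → i ≠ j → B x μ i j = 0 := by
    intro μ i j hjo hμj hij
    -- `n ≥ 5` leaves a fourth index `b`, so that the plane `(j, b)` fixes `x` and avoids `μ`, `i`.
    obtain ⟨b, -, hb⟩ := Finset.exists_mem_notMem_of_card_lt_card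
      (s := {o, j, μ, i}) (t := Finset.univ) <| by
        rw [Finset.card_univ, Fintype.card_fin]
        exact (Finset.card_le_four).trans_lt (by omega)
    simp only [Finset.mem_insert, Finset.mem_singleton, not_or] at hb
    obtain ⟨hbo, hbj, hbμ, hbi⟩ := hb
    exact apply_eq_zero_of_stabilizer hB hx (Ne.symm hbj) (hx0 j hjo) (hx0 b hbo) hμj
      (Ne.symm hbμ) hij (Ne.symm hbi)
  have hdiag : ∀ j, j ≠ o → epsP p j * B x j o j = epsP p w * B x w o w := by
    intro j hjo
    by_cases hjw : j = w
    · rw [hjw]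
    exact epsP_mul_apply_eq_of_stabilizer hB hx hjw (hx0 j hjo) (hx0 w hw) (Ne.symm hjo)
      (Ne.symm hw)
  intro μ
  have hwedge :
      wedge p q x (Pi.single μ 1) = r • wedge p q (Pi.single o 1) (Pi.single μ 1) := by
    rw [← wedge_smul_left, hxdef, ← Pi.single_smul, smul_eq_mul, mul_one]
  rw [eq_smul_wedge_of_entries ho _ (fun μ => apply_eq_neg_of_so (hso μ)) hzero hdiag μ,
    hwedge, smul_smul, div_mul_cancel₀ _ hr.ne']

end Stabilizer

section Transitivity

variable {p q : ℕ} {a b : Fin (p + q)}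

lemma SOplusChain.of_rotate (hab : a ≠ b) (he : epsP p a = epsP p b) (y : Fin (p + q) → ℝ) :
    SOplusChain p q
      (Function.update (Function.update y b 0) a (√(y a ^ 2 + y b ^ 2))) y := by
  set ρ := √(y a ^ 2 + y b ^ 2)
  by_cases hρ0 : ρ = 0
  · have hsum : y a ^ 2 + y b ^ 2 = 0 := (Real.sqrt_eq_zero (by positivity)).mp hρ0
    have hya : y a = 0 := by nlinarith [sq_nonneg (y b)]
    have hyb : y b = 0 := by nlinarith [sq_nonneg (y a)]
    have hz : Function.update (Function.update y b 0) a ρ = y := by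
      ext k
      by_cases hka : k = a <;> by_cases hkb : k = b <;> simp_all
    rw [hz]
    exact Relation.ReflTransGen.refl
  have hρpos : 0 < ρ := lt_of_le_of_ne (Real.sqrt_nonneg _) (Ne.symm hρ0)
  have hρsq : ρ ^ 2 = y a ^ 2 + y b ^ 2 := Real.sq_sqrt (by positivity)
  have h : (y a / ρ) ^ 2 + epsP p a * epsP p b * (y b / ρ) ^ 2 = 1 := by
    rw [he, epsP_mul_self, one_mul, div_pow, div_pow, ← add_div, ← hρsq,
      div_self (by positivity)]
  have hrot : planeRotation p q a b (y a / ρ) (y b / ρ) *ᵥ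
      Function.update (Function.update y b 0) a ρ = y := by
    ext k
    rw [planeRotation, planeMatrix_mulVec hab]
    by_cases hka : k = a
    · subst hka
      simp only [↓reduceIte, Function.update_self, Function.update_of_ne hab.symm, zero_mul,
        add_zero]
      field_simp
    by_cases hkb : k = b
    · subst hkb
      simp only [Ne.symm hab, ↓reduceIte, Function.update_self, Function.update_of_ne hab.symm,
        zero_mul, add_zero]
      field_simp
    simp [hka, hkb]
  have hchain := SOplusChain.single (SOplus_planeRotation hab h (Or.inl he))
    (Function.update (Function.update y b 0) a ρ)
  rwa [hrot] at hchain

lemma SOplusChain.exists_vanishing_on (a : Fin (p + q)) (S : Finset (Fin (p + q))) (haS : a ∉ S)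
    (hS : ∀ m ∈ S, epsP p m = epsP p a) (y : Fin (p + q) → ℝ) :
    ∃ z, SOplusChain p q z y ∧ (∀ m ∈ S, z m = 0) ∧
      (∀ m ∉ S, m ≠ a → z m = y m) ∧ (S.Nonempty → 0 ≤ z a) := by
  induction S using Finset.induction_on with
  | empty => exact ⟨y, Relation.ReflTransGen.refl, by simp, fun _ _ _ => rfl, by simp⟩
  | insert b S hbS ih =>
    have hab : a ≠ b := fun h => haS (h ▸ Finset.mem_insert_self a S)
    obtain ⟨z, hzy, hzS, hzy', -⟩ :=
      ih (fun h => haS (Finset.mem_insert_of_mem h)) fun m hm => hS m (Finset.mem_insert_of_mem hm)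
    refine ⟨_, (SOplusChain.of_rotate hab (hS b (Finset.mem_insert_self b S)).symm z).trans hzy,
      fun m hm => ?_, fun m hm hma => ?_, fun _ => by simp [Real.sqrt_nonneg]⟩
    · rcases Finset.mem_insert.mp hm with rfl | hm
      · simp [Ne.symm hab]
      · have hmb : m ≠ b := fun h => hbS (h ▸ hm)
        have hma : m ≠ a := fun h => haS (Finset.mem_insert_of_mem (h ▸ hm))
        simp [hmb, hma, hzS m hm]
    · rw [Finset.mem_insert, not_or] at hm
      simp [hma, hm.1, hzy' m hm.2 hma]

lemma SOplusChain.of_boost {o w : Fin (p + q)} (ho : (o : ℕ) < p) (hw : p ≤ (w : ℕ))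
    {z : Fin (p + q) → ℝ} (hz : ∀ m, m ≠ o → m ≠ w → z m = 0) (hzo : 0 ≤ z o)
    (hzq : 0 < qform p q z) : SOplusChain p q (Pi.single o (pqnorm p q z)) z := by
  have how : o ≠ w := fun h => by rw [h] at ho; omega
  have heo : epsP p o = 1 := if_pos ho
  have hew : epsP p w = -1 := if_neg (by omega)
  have hqz : qform p q z = z o ^ 2 - z w ^ 2 := by
    rw [qform_eq_sum, Fintype.sum_eq_add o w how fun m hm => by simp [hz m hm.1 hm.2], heo, hew]
    ring
  set r := pqnorm p q z
  have hr : 0 < r := Real.sqrt_pos.mpr hzq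
  have hrsq : r ^ 2 = z o ^ 2 - z w ^ 2 := by rw [← hqz]; exact Real.sq_sqrt hzq.le
  have hzo' : 0 < z o := lt_of_le_of_ne hzo fun h => by nlinarith [sq_nonneg (z w)]
  have h : (z o / r) ^ 2 + epsP p o * epsP p w * (z w / r) ^ 2 = 1 := by
    rw [heo, hew, div_pow, div_pow]
    field_simp
    linarith
  have hboost : planeRotation p q o w (z o / r) (z w / r) *ᵥ Pi.single o r = z := by
    ext k
    rw [planeRotation, planeMatrix_mulVec how]
    by_cases hko : k = o
    · subst hko
      simp only [↓reduceIte, Pi.single_eq_same, Pi.single_eq_of_ne (Ne.symm how), zero_mul,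
        add_zero]
      field_simp
    by_cases hkw : k = w
    · subst hkw
      simp only [Ne.symm how, ↓reduceIte, Pi.single_eq_same, Pi.single_eq_of_ne (Ne.symm how),
        zero_mul, add_zero]
      field_simp
    simp [hko, hkw, hz k hko hkw]
  have hchain := SOplusChain.single
    (SOplus_planeRotation how h (Or.inr (div_pos hzo' hr))) (Pi.single o r)
  rwa [hboost] at hchain

lemma SOplusChain.of_timelike (hp : 0 < p) (hq : 0 < q) {o : Fin (p + q)} (ho : (o : ℕ) = 0)
    {y : Fin (p + q) → ℝ} (hy : 0 < qform p q y) (hside : p = 1 → 0 < y o) :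
    SOplusChain p q (Pi.single o (pqnorm p q y)) y := by
  let w : Fin (p + q) := ⟨p, by omega⟩
  have hw : (w : ℕ) = p := rfl
  have hvo : ∀ {m : Fin (p + q)}, m ≠ o → (m : ℕ) ≠ 0 := fun h =>
    ho ▸ Fin.val_ne_of_ne h
  have hvw : ∀ {m : Fin (p + q)}, m ≠ w → (m : ℕ) ≠ p := fun h => Fin.val_ne_of_ne h
  suffices ∃ z, SOplusChain p q z y ∧ (∀ m, m ≠ o → m ≠ w → z m = 0) ∧ 0 ≤ z o by
    obtain ⟨z, hzy, hz, hzo⟩ := this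
    have hqz := hzy.qform_eq
    rw [show pqnorm p q y = pqnorm p q z by rw [pqnorm, pqnorm, hqz]]
    exact (SOplusChain.of_boost (by omega) hw.ge hz hzo (hqz ▸ hy)).trans hzy
  obtain ⟨z₁, hz₁, hz₁Q, hz₁y, -⟩ := SOplusChain.exists_vanishing_on w
    (Finset.univ.filter fun m => p < (m : ℕ)) (by simp [hw])
    (fun m hm => by
      rw [Finset.mem_filter_univ] at hm
      simp [epsP, hw, not_lt.mpr hm.le]) y
  by_cases hp1 : p = 1
  · refine ⟨z₁, hz₁, fun m hmo hmw => hz₁Q m ?_, ?_⟩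
    · have := hvo hmo; have := hvw hmw
      rw [Finset.mem_filter_univ]; omega
    · rw [hz₁y o (by rw [Finset.mem_filter_univ]; omega)
        (Fin.ne_of_val_ne (by rw [ho, hw]; omega))]
      exact (hside hp1).le
  obtain ⟨z₂, hz₂, hz₂P, hz₂y, hz₂o⟩ := SOplusChain.exists_vanishing_on o
    (Finset.univ.filter fun m => 0 < (m : ℕ) ∧ (m : ℕ) < p) (by simp [ho])
    (fun m hm => by
      rw [Finset.mem_filter_univ] at hm
      simp [epsP, ho, hm.2, hp]) z₁
  refine ⟨z₂, hz₂.trans hz₁, fun m hmo hmw => ?_,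
    hz₂o ⟨⟨1, by omega⟩,
      (Finset.mem_filter_univ _).mpr (show 0 < 1 ∧ 1 < p by omega)⟩⟩
  have := hvo hmo; have := hvw hmw
  by_cases hmp : (m : ℕ) < p
  · exact hz₂P m (by rw [Finset.mem_filter_univ]; omega)
  · rw [hz₂y m (by rw [Finset.mem_filter_univ]; omega) hmo]
    exact hz₁Q m (by rw [Finset.mem_filter_univ]; omega)

end Transitivity

theorem stmt12 (p q : ℕ) (hp : 1 ≤ p) (hpq : p ≤ q) (hn : 5 ≤ p + q)
    (B : (Fin (p + q) → ℝ) → Fin (p + q) → Matrix (Fin (p + q)) (Fin (p + q)) ℝ)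
    (hso : ∀ x, 0 < qform p q x → ∀ μ, (B x μ)ᵀ * Ipq p q + Ipq p q * B x μ = 0)
    (hequiv : ∀ Λ : Matrix (Fin (p + q)) (Fin (p + q)) ℝ, SOplus p q Λ →
      ∀ x, 0 < qform p q x → ∀ μ : Fin (p + q),
        B (Λ *ᵥ x) μ = ∑ ν, Λ⁻¹ ν μ • (Λ * B x ν * Λ⁻¹)) :
    ∃ g : ℝ → ℝ, ∀ x, 0 < qform p q x → (p = 1 → 0 < x ⟨0, by omega⟩) →
      ∀ μ i j : Fin (p + q),
        (B x μ) i j = g (pqnorm p q x) * epsP p j *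
          ((if μ = j then 1 else 0) * x i - (if μ = i then 1 else 0) * x j) := by
  let o : Fin (p + q) := ⟨0, by omega⟩
  let w : Fin (p + q) := ⟨1, by omega⟩
  have ho : (o : ℕ) < p := hp
  have hwo : w ≠ o := by simp [o, w, Fin.ext_iff]
  refine ⟨fun r => epsP p w * B (Pi.single o r) w o w / r, fun x hx hside μ i j => ?_⟩
  have hr : 0 < pqnorm p q x := Real.sqrt_pos.mpr hx
  have hr' : 0 < qform p q (Pi.single o (pqnorm p q x)) := by rw [qform_single ho]; positivity
  have hform := (isWedgeForm_single hequiv hn ho hr (hso _ hr') hwo).of_chain hequiv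
    (SOplusChain.of_timelike hp (by omega) rfl hx hside) hr'
  rw [hform μ, Matrix.smul_apply, wedge_apply, smul_eq_mul]
  simp only [Pi.single_apply, eq_comm (a := μ)]
  ring
end
end

section
/- Let n ≥ 4 and let S : ℝⁿ → (M_n(ℝ))ⁿ be such that each matrix S_i(x) is symmetric with trace zero, and such that for all Λ ∈ SO(n), x ∈ ℝⁿ and i: S_i(Λx) = Σ_{j=1}^n (Λ⁻¹)_{j,i} · Λ S_j(x) Λᵀ. Then there exist functions g₁, g₂ : [0,∞) → ℝ such that for every x ∈ ℝⁿ and every i: S_i(x) = g₁(|x|)·x_i·(x xᵀ − (|x|²/n)·1) + g₂(|x|)·(e_i xᵀ + x e_iᵀ − (2 x_i/n)·1), where |x| is the Euclidean norm of x, 1 is the identity matrix, and (e_1,…,e_n) is the standard basis of ℝⁿ. -/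
/-!
Equivariance reduces everything to the points `r • e_o`: a rotation carries `r • e_o` to any `x`
with `|x| = r`, and the two-term tensor of the conclusion (`isotropicTensor`) is itself
equivariant. The stabiliser of `r • e_o` in `SO(n)` contains the signed permutation matrices of
determinant one fixing `e_o`. Flipping the signs of two coordinates `k, m ≠ o` kills every entry
`S_i(a, b)` in which some `k ≠ o` occurs an odd number of times among `i, a, b`; since `n ≥ 4`,
such an `m` outside `{o, i, a, b}` exists unless `o, i, a, b` are distinct, and then a
transposition together with the symmetry of `S_i` does the job. Transpositions of coordinates
`≠ o` identify the surviving entries `S_o(a, a)` and `S_a(o, a)` for all `a ≠ o`, and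
tracelessness determines `S_o(o, o)`. Two numbers per radius remain, and they give `g₁` and `g₂`.
-/

open Matrix BigOperators

noncomputable section

/-- Euclidean norm on `ℝⁿ`. -/
def nrm {n : ℕ} (x : Fin n → ℝ) : ℝ := Real.sqrt (∑ i, x i ^ 2)

section SignedPerm

variable {ι R : Type*} [Fintype ι] [DecidableEq ι] [CommRing R]

def signedPerm (σ : Equiv.Perm ι) (d : ι → R) : Matrix ι ι R :=
  σ.permMatrix R * diagonal d

lemma signedPerm_apply (σ : Equiv.Perm ι) (d : ι → R) (i j : ι) :
    signedPerm σ d i j = if σ i = j then d j else 0 := by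
  rw [signedPerm, PEquiv.toMatrix_toPEquiv_mul, submatrix_apply, diagonal_apply]
  split_ifs with h <;> simp_all

lemma det_signedPerm (σ : Equiv.Perm ι) (d : ι → R) :
    (signedPerm σ d).det = Equiv.Perm.sign σ * ∏ k, d k := by
  rw [signedPerm, det_mul, det_permutation, det_diagonal]

lemma transpose_signedPerm_mul_self (σ : Equiv.Perm ι) {d : ι → R} (hd : ∀ k, d k * d k = 1) :
    (signedPerm σ d)ᵀ * signedPerm σ d = 1 := by
  rw [signedPerm, transpose_mul, diagonal_transpose, transpose_permMatrix, Matrix.mul_assoc,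
    ← Matrix.mul_assoc (σ⁻¹.permMatrix R), ← permMatrix_mul, mul_inv_cancel, permMatrix_one,
    Matrix.one_mul, diagonal_mul_diagonal, funext hd, diagonal_one]

lemma signedPerm_mulVec_apply (σ : Equiv.Perm ι) (d v : ι → R) (p : ι) :
    (signedPerm σ d *ᵥ v) p = d (σ p) * v (σ p) := by
  rw [signedPerm, ← mulVec_mulVec, permMatrix_mulVec, Function.comp_apply, mulVec_diagonal]

lemma signedPerm_mul_mul_transpose_apply_s13 (σ : Equiv.Perm ι) (d : ι → R) (M : Matrix ι ι R)
    (a b : ι) :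
    (signedPerm σ d * M * (signedPerm σ d)ᵀ) a b = d (σ a) * d (σ b) * M (σ a) (σ b) := by
  rw [signedPerm, transpose_mul, diagonal_transpose, transpose_permMatrix, Matrix.mul_assoc,
    Matrix.mul_assoc, ← Matrix.mul_assoc M, ← Matrix.mul_assoc (diagonal d),
    PEquiv.toMatrix_toPEquiv_mul, submatrix_apply, Equiv.Perm.permMatrix,
    PEquiv.mul_toMatrix_toPEquiv, submatrix_apply]
  simp [Equiv.Perm.inv_def, mul_comm, mul_left_comm]

end SignedPerm

lemma mul_vecMulVec_mul_transpose {ι R : Type*} [Fintype ι] [CommSemiring R]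
    (Λ : Matrix ι ι R) (v w : ι → R) :
    Λ * vecMulVec v w * Λᵀ = vecMulVec (Λ *ᵥ v) (Λ *ᵥ w) := by
  rw [mul_vecMulVec, vecMulVec_mul, vecMul_transpose]

lemma vecMulVec_single_single {ι R : Type*} [DecidableEq ι] [Semiring R] (i j : ι) (a b : R) :
    vecMulVec (Pi.single i a) (Pi.single j b) = (a * b) • single i j 1 := by
  ext p q
  simp only [vecMulVec_apply, Pi.single_apply, Matrix.smul_apply, single_apply, smul_eq_mul]
  split_ifs <;> simp_all

section FlipSign

variable {ι : Type*} [DecidableEq ι]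

/-- A product `flipSign k i * flipSign k a * flipSign k b` is `-1` exactly when `k` occurs an odd
number of times among `i, a, b`. -/
def flipSign (k p : ι) : ℝ := if p = k then -1 else 1

lemma flipSign_self (k : ι) : flipSign k k = -1 := if_pos rfl

lemma flipSign_of_ne {k p : ι} (h : p ≠ k) : flipSign k p = 1 := if_neg h

lemma flipSign_mul_self (k p : ι) : flipSign k p * flipSign k p = 1 := by
  unfold flipSign
  split_ifs <;> norm_num

lemma prod_flipSign [Fintype ι] (k : ι) : ∏ p, flipSign k p = -1 := by
  simp [flipSign, Finset.prod_ite_eq']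

lemma flipSign_swap (u v p : ι) : flipSign v (Equiv.swap u v p) = flipSign u p := by
  simp only [flipSign, Equiv.swap_apply_eq_iff, Equiv.swap_apply_right]

lemma exists_flipSign_mul_eq_neg_one (i a b : ι) :
    ∃ k, flipSign k i * flipSign k a * flipSign k b = -1 := by
  by_cases hab : a = b
  · exact ⟨i, by rw [hab, flipSign_self, mul_assoc, flipSign_mul_self, neg_one_mul]⟩
  by_cases hia : i = a
  · exact ⟨b, by simp [hia, flipSign_of_ne hab, flipSign_self]⟩
  · exact ⟨a, by simp [flipSign_of_ne hia, flipSign_of_ne (Ne.symm hab), flipSign_self]⟩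

lemma exists_ne_or_pairwise_ne [Fintype ι] (hι : 4 ≤ Fintype.card ι) (o i a b : ι) :
    (∃ m, m ≠ o ∧ m ≠ i ∧ m ≠ a ∧ m ≠ b) ∨
      (o ≠ i ∧ o ≠ a ∧ o ≠ b ∧ i ≠ a ∧ i ≠ b ∧ a ≠ b) := by
  refine or_iff_not_imp_left.mpr fun hfree => ?_
  push Not at hfree
  have huniv : ({o, i, a, b} : Multiset ι).toFinset = Finset.univ :=
    Finset.eq_univ_of_forall fun m => by
      by_contra hm
      simp only [Multiset.mem_toFinset, Multiset.insert_eq_cons, Multiset.mem_cons,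
        Multiset.mem_singleton, not_or] at hm
      exact hm.2.2.2 (hfree m hm.1 hm.2.1 hm.2.2.1)
  have hnodup : ({o, i, a, b} : Multiset ι).Nodup := by
    rw [← Multiset.toFinset_card_eq_card_iff_nodup]
    refine le_antisymm (Multiset.toFinset_card_le _) ?_
    rw [huniv, Finset.card_univ]
    simpa using hι
  simpa [and_assoc] using hnodup

end FlipSign

section IsotropicTensor

variable {n : ℕ}

def isotropicTensor (g₁ g₂ c : ℝ) (x : Fin n → ℝ) (i : Fin n) : Matrix (Fin n) (Fin n) ℝ :=
  (g₁ * x i) • (vecMulVec x x - c • (1 : Matrix (Fin n) (Fin n) ℝ))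
    + g₂ • (vecMulVec (Pi.single i 1) x + vecMulVec x (Pi.single i 1)
      - (2 * x i / (n : ℝ)) • (1 : Matrix (Fin n) (Fin n) ℝ))

lemma mul_isotropicTensor_mul_transpose {Λ : Matrix (Fin n) (Fin n) ℝ} (hΛ : Λ * Λᵀ = 1)
    (g₁ g₂ c : ℝ) (y : Fin n → ℝ) (j : Fin n) :
    Λ * isotropicTensor g₁ g₂ c y j * Λᵀ =
      (g₁ * y j) • (vecMulVec (Λ *ᵥ y) (Λ *ᵥ y) - c • (1 : Matrix (Fin n) (Fin n) ℝ))
        + g₂ • (vecMulVec (Λ.col j) (Λ *ᵥ y) + vecMulVec (Λ *ᵥ y) (Λ.col j)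
          - (2 * y j / (n : ℝ)) • (1 : Matrix (Fin n) (Fin n) ℝ)) := by
  simp only [isotropicTensor, Matrix.mul_add, Matrix.add_mul, Matrix.mul_sub, Matrix.sub_mul,
    Matrix.mul_smul, Matrix.smul_mul, Matrix.mul_one, hΛ, mul_vecMulVec_mul_transpose,
    mulVec_single_one]

lemma sum_smul_mul_isotropicTensor_mul_transpose {Λ : Matrix (Fin n) (Fin n) ℝ}
    (hΛ : Λ * Λᵀ = 1) (g₁ g₂ c : ℝ) (y : Fin n → ℝ) (i : Fin n) :
    ∑ j, Λᵀ j i • (Λ * isotropicTensor g₁ g₂ c y j * Λᵀ) =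
      isotropicTensor g₁ g₂ c (Λ *ᵥ y) i := by
  have hrows : ∀ p q, ∑ j, Λ p j * Λ q j = if q = p then 1 else 0 := fun p q => by
    simpa [mul_apply, one_apply, eq_comm] using congrFun (congrFun hΛ p) q
  have hmulVec : ∑ j, Λ i j * y j = (Λ *ᵥ y) i := rfl
  ext a b
  simp_rw [mul_isotropicTensor_mul_transpose hΛ]
  simp only [isotropicTensor, Matrix.sum_apply, Matrix.smul_apply, Matrix.add_apply,
    Matrix.sub_apply, vecMulVec_apply, one_apply, col_apply, transpose_apply, smul_eq_mul,
    Pi.single_apply]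
  set δ : ℝ := if a = b then 1 else 0
  calc ∑ j, Λ i j * (g₁ * y j * ((Λ *ᵥ y) a * (Λ *ᵥ y) b - c * δ)
        + g₂ * (Λ a j * (Λ *ᵥ y) b + (Λ *ᵥ y) a * Λ b j - 2 * y j / n * δ))
      = (∑ j, Λ i j * y j) * (g₁ * ((Λ *ᵥ y) a * (Λ *ᵥ y) b - c * δ) - 2 * g₂ / n * δ)
        + g₂ * (Λ *ᵥ y) b * ∑ j, Λ i j * Λ a j + g₂ * (Λ *ᵥ y) a * ∑ j, Λ i j * Λ b j := by
        simp only [Finset.sum_mul, Finset.mul_sum, ← Finset.sum_add_distrib]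
        exact Finset.sum_congr rfl fun j _ => by ring
    _ = _ := by
        rw [hmulVec, hrows, hrows]
        split_ifs <;> ring

end IsotropicTensor

section Rotation

variable {n : ℕ}

lemma nrm_nonneg (x : Fin n → ℝ) : 0 ≤ nrm x := Real.sqrt_nonneg _

lemma nrm_eq_norm (x : Fin n → ℝ) : nrm x = ‖WithLp.toLp 2 x‖ := by
  simp [nrm, EuclideanSpace.norm_eq]

lemma exists_orthogonal_mulVec_single (o : Fin n) {u : EuclideanSpace ℝ (Fin n)}
    (hu : ‖u‖ = 1) : ∃ Λ : Matrix (Fin n) (Fin n) ℝ, Λᵀ * Λ = 1 ∧ Λ *ᵥ Pi.single o 1 = u := by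
  have hv : Orthonormal ℝ (({o} : Set (Fin n)).domRestrict fun _ => u) :=
    ⟨fun _ => hu, fun i j hij => (hij (Subsingleton.elim i j)).elim⟩
  obtain ⟨b, hb⟩ := hv.exists_orthonormalBasis_extension_of_card_eq (by simp)
  refine ⟨(EuclideanSpace.basisFun (Fin n) ℝ).toBasis.toMatrix b,
    (mem_orthogonalGroup_iff' _ _).mp
      ((EuclideanSpace.basisFun (Fin n) ℝ).toMatrix_orthonormalBasis_mem_orthogonal b), ?_⟩
  ext i
  rw [mulVec_single_one, col_apply, Module.Basis.toMatrix_apply,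
    OrthonormalBasis.coe_toBasis_repr_apply, EuclideanSpace.basisFun_repr, hb o rfl]

lemma exists_rotation_mulVec_single {o c : Fin n} (hc : c ≠ o) (x : Fin n → ℝ) :
    ∃ Λ : Matrix (Fin n) (Fin n) ℝ, Λᵀ * Λ = 1 ∧ Λ.det = 1 ∧ Λ *ᵥ Pi.single o (nrm x) = x := by
  rcases eq_or_ne x 0 with rfl | hx
  · exact ⟨1, by simp, by simp, by simp [nrm]⟩
  have hr : nrm x ≠ 0 := by
    rw [nrm_eq_norm, norm_ne_zero_iff]
    exact fun h => hx (congrArg WithLp.ofLp h)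
  obtain ⟨Λ, hΛ, hΛx⟩ := exists_orthogonal_mulVec_single o
    (u := WithLp.toLp 2 ((nrm x)⁻¹ • x)) (by
      rw [WithLp.toLp_smul, norm_smul, ← nrm_eq_norm, norm_inv,
        Real.norm_of_nonneg (nrm_nonneg x), inv_mul_cancel₀ hr])
  have hΛr : Λ *ᵥ Pi.single o (nrm x) = x := by
    rw [← mul_one (nrm x), ← smul_eq_mul, Pi.single_smul', mulVec_smul, hΛx, WithLp.ofLp_toLp,
      smul_inv_smul₀ hr]
  have hdet : Λ.det = 1 ∨ Λ.det = -1 := by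
    have h := congrArg det hΛ
    rw [det_mul, det_transpose, det_one] at h
    exact mul_self_eq_one_iff.mp h
  rcases hdet with hdet | hdet
  · exact ⟨Λ, hΛ, hdet, hΛr⟩
  -- the reflection in the coordinate `c` fixes `e_o` and corrects the determinant
  have hfix : signedPerm 1 (flipSign c) *ᵥ Pi.single o (nrm x) = Pi.single o (nrm x) := by
    ext p
    rw [signedPerm_mulVec_apply, Equiv.Perm.one_apply]
    rcases eq_or_ne p c with rfl | hp
    · simp [hc]
    · rw [flipSign_of_ne hp, one_mul]
  refine ⟨Λ * signedPerm 1 (flipSign c), ?_, ?_, ?_⟩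
  · rw [transpose_mul, Matrix.mul_assoc, ← Matrix.mul_assoc Λᵀ, hΛ, Matrix.one_mul,
      transpose_signedPerm_mul_self 1 (flipSign_mul_self c)]
  · rw [det_mul, hdet, det_signedPerm, prod_flipSign]
    simp
  · rw [← mulVec_mulVec, hfix, hΛr]

end Rotation

section Equivariant

variable {n : ℕ}

def IsSOEquivariant (S : (Fin n → ℝ) → Fin n → Matrix (Fin n) (Fin n) ℝ) : Prop :=
  ∀ Λ : Matrix (Fin n) (Fin n) ℝ, Λᵀ * Λ = 1 → Λ.det = 1 →
    ∀ (x : Fin n → ℝ) (i : Fin n), S (Λ *ᵥ x) i = ∑ j, Λ⁻¹ j i • (Λ * S x j * Λᵀ)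

variable {S : (Fin n → ℝ) → Fin n → Matrix (Fin n) (Fin n) ℝ}

namespace IsSOEquivariant

lemma apply_eq_of_signedPerm (hS : IsSOEquivariant S) {σ : Equiv.Perm (Fin n)}
    {d : Fin n → ℝ} (hd : ∀ k, d k * d k = 1) (hdet : (Equiv.Perm.sign σ : ℝ) * ∏ k, d k = 1)
    {x : Fin n → ℝ} (hx : signedPerm σ d *ᵥ x = x) (i a b : Fin n) :
    S x i a b = d (σ i) * d (σ a) * d (σ b) * S x (σ i) (σ a) (σ b) := by
  have horth := transpose_signedPerm_mul_self σ hd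
  have h := hS _ horth (by rw [det_signedPerm, hdet]) x i
  rw [hx, inv_eq_left_inv horth] at h
  rw [h, Matrix.sum_apply, Finset.sum_eq_single (σ i)]
  · simp only [Matrix.smul_apply, transpose_apply, signedPerm_apply, if_pos, smul_eq_mul,
      signedPerm_mul_mul_transpose_apply_s13]
    ring
  · intro j _ hj
    simp [transpose_apply, signedPerm_apply, Ne.symm hj]
  · simp

lemma apply_eq_zero_of_flipSign (hS : IsSOEquivariant S) {k m : Fin n} {x : Fin n → ℝ}
    (hxk : x k = 0) (hxm : x m = 0) {i a b : Fin n}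
    (hodd : flipSign k i * flipSign k a * flipSign k b = -1)
    (hmi : i ≠ m) (hma : a ≠ m) (hmb : b ≠ m) : S x i a b = 0 := by
  have hx : signedPerm 1 (fun p => flipSign k p * flipSign m p) *ᵥ x = x := by
    ext p
    rw [signedPerm_mulVec_apply, Equiv.Perm.one_apply]
    by_cases hpk : p = k
    · simp [hpk, hxk]
    by_cases hpm : p = m
    · simp [hpm, hxm]
    · simp [flipSign_of_ne hpk, flipSign_of_ne hpm]
  have h := hS.apply_eq_of_signedPerm (fun p => by
      rw [mul_mul_mul_comm, flipSign_mul_self, flipSign_mul_self, one_mul])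
    (by simp [Finset.prod_mul_distrib, prod_flipSign]) hx i a b
  simp only [Equiv.Perm.one_apply, flipSign_of_ne hmi, flipSign_of_ne hma, flipSign_of_ne hmb,
    mul_one] at h
  rw [hodd] at h
  linarith

lemma apply_eq_swap (hS : IsSOEquivariant S) {u v : Fin n} (huv : u ≠ v) {x : Fin n → ℝ}
    (hxu : x u = 0) (hxv : x v = 0) (i a b : Fin n) :
    S x i a b = flipSign u i * flipSign u a * flipSign u b *
      S x (Equiv.swap u v i) (Equiv.swap u v a) (Equiv.swap u v b) := by
  have hx : signedPerm (Equiv.swap u v) (flipSign v) *ᵥ x = x := by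
    ext p
    rw [signedPerm_mulVec_apply, flipSign_swap, Equiv.swap_apply_def]
    split_ifs with hpu hpv
    · simp [hpu, hxu, hxv]
    · simp [hpv, flipSign_of_ne (Ne.symm huv), hxu, hxv]
    · simp [flipSign_of_ne hpu]
  have h := hS.apply_eq_of_signedPerm (flipSign_mul_self v)
    (by simp [Equiv.Perm.sign_swap huv, prod_flipSign]) hx i a b
  simpa only [flipSign_swap] using h

lemma apply_zero (hS : IsSOEquivariant S) (hn : 4 ≤ n) (i : Fin n) : S 0 i = 0 := by
  ext a b
  obtain ⟨k, hodd⟩ := exists_flipSign_mul_eq_neg_one i a b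
  obtain ⟨m, -, hmi, hma, hmb⟩ :=
    (exists_ne_or_pairwise_ne (by simpa using hn) i i a b).resolve_right fun h => h.1 rfl
  exact hS.apply_eq_zero_of_flipSign rfl rfl hodd hmi.symm hma.symm hmb.symm

lemma apply_single_eq_zero_of_flipSign (hS : IsSOEquivariant S)
    (hsymm : ∀ x i, (S x i)ᵀ = S x i) (hn : 4 ≤ n) {o k : Fin n} (hk : k ≠ o) (r : ℝ)
    {i a b : Fin n} (hodd : flipSign k i * flipSign k a * flipSign k b = -1) :
    S (Pi.single o r) i a b = 0 := by
  rcases exists_ne_or_pairwise_ne (by simpa using hn) o i a b with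
    ⟨m, hmo, hmi, hma, hmb⟩ | ⟨-, hoa, hob, hia, hib, hab⟩
  · exact hS.apply_eq_zero_of_flipSign (by simp [hk]) (by simp [hmo])
      hodd hmi.symm hma.symm hmb.symm
  · -- no coordinate is free for a second sign flip; swapping `a` and `b` instead makes the entry
    -- antisymmetric in `a, b`
    have h := hS.apply_eq_swap (x := Pi.single o r) hab (by simp [hoa.symm])
      (by simp [hob.symm]) i a b
    have hsym : S (Pi.single o r) i b a = S (Pi.single o r) i a b := by
      rw [← transpose_apply (S (Pi.single o r) i), hsymm]
    rw [Equiv.swap_apply_of_ne_of_ne hia hib, Equiv.swap_apply_left, Equiv.swap_apply_right,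
      flipSign_of_ne hia, flipSign_self, flipSign_of_ne hab.symm, hsym] at h
    linarith

lemma apply_single_diag_eq (hS : IsSOEquivariant S) {o u v : Fin n} (hu : u ≠ o) (hv : v ≠ o)
    (r : ℝ) : S (Pi.single o r) o u u = S (Pi.single o r) o v v := by
  rcases eq_or_ne u v with rfl | huv
  · rfl
  have h := hS.apply_eq_swap (x := Pi.single o r) huv (by simp [hu]) (by simp [hv]) o u u
  rw [Equiv.swap_apply_of_ne_of_ne hu.symm hv.symm, Equiv.swap_apply_left, flipSign_self,
    flipSign_of_ne hu.symm] at h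
  linarith

lemma apply_single_mixed_eq (hS : IsSOEquivariant S) {o u v : Fin n} (hu : u ≠ o) (hv : v ≠ o)
    (r : ℝ) : S (Pi.single o r) u o u = S (Pi.single o r) v o v := by
  rcases eq_or_ne u v with rfl | huv
  · rfl
  have h := hS.apply_eq_swap (x := Pi.single o r) huv (by simp [hu]) (by simp [hv]) u o u
  rw [Equiv.swap_apply_of_ne_of_ne hu.symm hv.symm, Equiv.swap_apply_left, flipSign_self,
    flipSign_of_ne hu.symm] at h
  linarith

lemma apply_single_corner (hS : IsSOEquivariant S) (htr : ∀ x i, (S x i).trace = 0)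
    {o c : Fin n} (hc : c ≠ o) (r : ℝ) :
    S (Pi.single o r) o o o = -((n : ℝ) - 1) * S (Pi.single o r) o c c := by
  have h := htr (Pi.single o r) o
  rw [trace, ← Finset.add_sum_erase _ _ (Finset.mem_univ o)] at h
  simp only [diag_apply] at h
  rw [Finset.sum_congr rfl fun a ha => hS.apply_single_diag_eq (Finset.ne_of_mem_erase ha) hc r,
    Finset.sum_const, Finset.card_erase_of_mem (Finset.mem_univ o), Finset.card_univ,
    Fintype.card_fin, nsmul_eq_mul, Nat.cast_pred (Fin.pos o)] at h
  linarith

lemma apply_single_self (hS : IsSOEquivariant S) (hsymm : ∀ x i, (S x i)ᵀ = S x i)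
    (htr : ∀ x i, (S x i).trace = 0) (hn : 4 ≤ n) {o c : Fin n} (hc : c ≠ o) (r : ℝ) :
    S (Pi.single o r) o = S (Pi.single o r) o c c • (1 - (n : ℝ) • single o o 1) := by
  ext a b
  simp only [Matrix.smul_apply, Matrix.sub_apply, one_apply, single_apply, smul_eq_mul]
  rcases eq_or_ne a b with rfl | hab
  · rcases eq_or_ne a o with rfl | ha
    · rw [hS.apply_single_corner htr hc r]
      simp only [and_self, if_true]
      ring
    · rw [hS.apply_single_diag_eq ha hc r]
      simp [ha.symm]
  · rw [if_neg hab, if_neg fun h => hab (h.1.symm.trans h.2), mul_zero, sub_zero, mul_zero]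
    rcases eq_or_ne a o with rfl | ha
    · exact hS.apply_single_eq_zero_of_flipSign hsymm hn hab.symm r
        (by simp [flipSign_of_ne hab, flipSign_self])
    · exact hS.apply_single_eq_zero_of_flipSign hsymm hn ha r
        (by simp [flipSign_of_ne ha.symm, flipSign_of_ne hab.symm, flipSign_self])

lemma apply_single_of_ne (hS : IsSOEquivariant S) (hsymm : ∀ x i, (S x i)ᵀ = S x i)
    (hn : 4 ≤ n) {o c j : Fin n} (hc : c ≠ o) (hj : j ≠ o) (r : ℝ) :
    S (Pi.single o r) j = S (Pi.single o r) c o c • (single o j 1 + single j o 1) := by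
  ext a b
  simp only [Matrix.smul_apply, Matrix.add_apply, single_apply, smul_eq_mul]
  rcases eq_or_ne a j with rfl | haj
  · rcases eq_or_ne b o with rfl | hbo
    · rw [← transpose_apply (S _ a), hsymm, hS.apply_single_mixed_eq hj hc r]
      simp [hj.symm]
    rcases eq_or_ne b a with rfl | hba
    · rw [hS.apply_single_eq_zero_of_flipSign hsymm hn hj r (k := b) (by simp [flipSign_self])]
      simp [hj.symm]
    · rw [hS.apply_single_eq_zero_of_flipSign hsymm hn hbo r (k := b)
        (by simp [flipSign_of_ne hba.symm, flipSign_self])]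
      simp [hj.symm, hbo.symm]
  · rcases eq_or_ne b j with rfl | hbj
    · rcases eq_or_ne a o with rfl | hao
      · rw [hS.apply_single_mixed_eq hj hc r]
        simp [hj.symm]
      · rw [hS.apply_single_eq_zero_of_flipSign hsymm hn hao r (k := a)
          (by simp [flipSign_of_ne haj.symm, flipSign_self])]
        simp [hao.symm, haj.symm]
    · rw [hS.apply_single_eq_zero_of_flipSign hsymm hn hj r (k := j)
        (by simp [flipSign_of_ne haj, flipSign_of_ne hbj, flipSign_self])]
      simp [haj.symm, hbj.symm]

lemma apply_single_eq_isotropicTensor (hS : IsSOEquivariant S)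
    (hsymm : ∀ x i, (S x i)ᵀ = S x i) (htr : ∀ x i, (S x i).trace = 0) (hn : 4 ≤ n)
    {o c : Fin n} (hc : c ≠ o) (r : ℝ) (j : Fin n) :
    S (Pi.single o r) j = isotropicTensor
      ((-(n : ℝ) * S (Pi.single o r) o c c - 2 * S (Pi.single o r) c o c) / r ^ 3)
      (S (Pi.single o r) c o c / r) (r ^ 2 / n) (Pi.single o r) j := by
  rcases eq_or_ne r 0 with rfl | hr
  · simp [hS.apply_zero hn, isotropicTensor]
  have hn0 : (n : ℝ) ≠ 0 := by positivity
  simp only [isotropicTensor, vecMulVec_single_single, Pi.single_apply, mul_one, one_mul]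
  rcases eq_or_ne j o with rfl | hj
  · conv_lhs => rw [hS.apply_single_self hsymm htr hn hc r]
    simp only [if_pos]
    match_scalars <;> field_simp <;> ring
  · conv_lhs => rw [hS.apply_single_of_ne hsymm hn hc hj r]
    simp only [if_neg hj, mul_zero, zero_smul, zero_add, zero_div, sub_zero]
    match_scalars <;> field_simp

lemma apply_mulVec_eq_isotropicTensor (hS : IsSOEquivariant S) {Λ : Matrix (Fin n) (Fin n) ℝ}
    (hΛ : Λᵀ * Λ = 1) (hdet : Λ.det = 1) {g₁ g₂ c : ℝ} {y : Fin n → ℝ}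
    (hy : ∀ j, S y j = isotropicTensor g₁ g₂ c y j) (i : Fin n) :
    S (Λ *ᵥ y) i = isotropicTensor g₁ g₂ c (Λ *ᵥ y) i := by
  rw [hS Λ hΛ hdet y i, inv_eq_left_inv hΛ]
  simp_rw [hy]
  exact sum_smul_mul_isotropicTensor_mul_transpose (mul_eq_one_comm.mpr hΛ) g₁ g₂ c y i

end IsSOEquivariant

end Equivariant

theorem stmt13 (n : ℕ) (hn : 4 ≤ n)
    (S : (Fin n → ℝ) → Fin n → Matrix (Fin n) (Fin n) ℝ)
    (hsymm : ∀ x i, (S x i)ᵀ = S x i)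
    (htr : ∀ x i, (S x i).trace = 0)
    (hequiv : ∀ Λ : Matrix (Fin n) (Fin n) ℝ, Λᵀ * Λ = 1 → Λ.det = 1 →
      ∀ (x : Fin n → ℝ) (i : Fin n),
        S (Λ *ᵥ x) i = ∑ j, Λ⁻¹ j i • (Λ * S x j * Λᵀ)) :
    ∃ g₁ g₂ : ℝ → ℝ, ∀ (x : Fin n → ℝ) (i : Fin n),
      S x i = (g₁ (nrm x) * x i) •
          (vecMulVec x x - (nrm x ^ 2 / (n : ℝ)) • (1 : Matrix (Fin n) (Fin n) ℝ))
        + g₂ (nrm x) •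
          (vecMulVec (Pi.single i 1) x + vecMulVec x (Pi.single i 1)
            - (2 * x i / (n : ℝ)) • (1 : Matrix (Fin n) (Fin n) ℝ)) := by
  have hS : IsSOEquivariant S := hequiv
  obtain ⟨o, c, hc⟩ : ∃ o c : Fin n, c ≠ o :=
    ⟨⟨0, by omega⟩, ⟨1, by omega⟩, by simp [Fin.ext_iff]⟩
  refine ⟨fun r => (-(n : ℝ) * S (Pi.single o r) o c c - 2 * S (Pi.single o r) c o c) / r ^ 3,
    fun r => S (Pi.single o r) c o c / r, fun x i => ?_⟩
  obtain ⟨Λ, hΛ, hdet, hΛx⟩ := exists_rotation_mulVec_single hc x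
  have h := hS.apply_mulVec_eq_isotropicTensor hΛ hdet
    (hS.apply_single_eq_isotropicTensor hsymm htr hn hc (nrm x)) i
  rwa [hΛx] at h
end
end
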